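/- Let q = 2^t and let g, g' ∈ {0,1}^t agree on a set I of at most δt bit positions. If a common subsequence of σ_g and σ_{g'} (σ_h(i) = i XOR h) has length greater than 2^{δt}, then by pigeonhole there exist two distinct elements x, y of the subsequence whose binary representations agree on all positions in I; moreover any two such elements are ordered oppositely by σ_g and σ_{g'}, a contradiction. Hence L(σ_g, σ_{g'}) ≤ 2^{δt}. -/

import Mathlib

/-- Length of a longest common subsequence of two lists. -/
def lcsLen (x y : List ℕ) : ℕ :=
  ((x.sublists.filter (fun s => decide (s.Sublist y))).map List.length).foldr max 0

/-- The permutation `σ_g` of `[2^t]`, `i ↦ i XOR g`, viewed as a length-`2^t` sequence. -/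
def sigmaList (t g : ℕ) : List ℕ := (List.range (2 ^ t)).map (fun i => i ^^^ g)

/-!
Two elements `x ≠ y` are compared by `σ_h` according to the highest bit `m` in which they
differ: `x` comes first iff `x` and `h` agree at `m`. So if `σ_g` and `σ_{g'}` order `x, y` the
same way, then `g` and `g'` agree at a bit where `x` and `y` differ. Among more than `2^|I|`
elements two agree on all of `I`, so a common subsequence of `σ_g` and `σ_{g'}` has at most
`2^|I|` elements.
-/

namespace Nat

theorem lt_iff_testBit_eq_false_of_msb {a b m : ℕ} (hm : (a ^^^ b).testBit m = true)
    (hhigh : ∀ j, m < j → (a ^^^ b).testBit j = false) :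
    a < b ↔ a.testBit m = false := by
  rw [testBit_xor, Bool.xor_iff_ne] at hm
  have heq : ∀ j, m < j → a.testBit j = b.testBit j := fun j hj => by
    simpa [testBit_xor] using hhigh j hj
  cases ha : a.testBit m
  · have hb : b.testBit m = true := by simpa [ha] using hm.symm
    exact iff_of_true (lt_of_testBit m ha hb heq) rfl
  · have hb : b.testBit m = false := by simpa [ha] using hm.symm
    exact iff_of_false (lt_asymm (lt_of_testBit m hb ha fun j hj => (heq j hj).symm))
      (by decide)

theorem xor_lt_xor_iff_testBit_eq {x y h m : ℕ} (hm : (x ^^^ y).testBit m = true)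
    (hhigh : ∀ j, m < j → (x ^^^ y).testBit j = false) :
    x ^^^ h < y ^^^ h ↔ x.testBit m = h.testBit m := by
  have hxy : (x ^^^ h) ^^^ (y ^^^ h) = x ^^^ y := by
    rw [xor_comm y h, ← xor_assoc, xor_cancel_right]
  rw [lt_iff_testBit_eq_false_of_msb (hxy ▸ hm) (hxy ▸ hhigh), testBit_xor,
    bne_eq_false_iff_eq]

theorem exists_testBit_eq_of_xor_lt_xor {x y g g' : ℕ} (hxy : x ≠ y) (h : x ^^^ g < y ^^^ g)
    (h' : x ^^^ g' < y ^^^ g') :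
    ∃ m, 2 ^ m ≤ x ^^^ y ∧ x.testBit m ≠ y.testBit m ∧ g.testBit m = g'.testBit m := by
  obtain ⟨m, hm, hhigh⟩ := exists_most_significant_bit (mt xor_eq_zero_iff.1 hxy)
  refine ⟨m, ge_two_pow_of_testBit hm, fun hbit => by simp [testBit_xor, hbit] at hm, ?_⟩
  rw [← (xor_lt_xor_iff_testBit_eq hm hhigh).1 h, (xor_lt_xor_iff_testBit_eq hm hhigh).1 h']

end Nat

theorem sigmaList_pairwise (t g : ℕ) :
    (sigmaList t g).Pairwise (fun u v => u ^^^ g < v ^^^ g) :=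
  List.Pairwise.map _ (fun a b h => by simpa [xor_cancel_right] using h) List.pairwise_lt_range

theorem sigmaList_nodup (t g : ℕ) : (sigmaList t g).Nodup :=
  (sigmaList_pairwise t g).imp fun h huv => h.ne (by rw [huv])

theorem xor_lt_two_pow_of_mem_sigmaList {t g x y : ℕ} (hx : x ∈ sigmaList t g)
    (hy : y ∈ sigmaList t g) : x ^^^ y < 2 ^ t := by
  obtain ⟨i, hi, rfl⟩ := List.mem_map.1 hx
  obtain ⟨j, hj, rfl⟩ := List.mem_map.1 hy
  rw [xor_comm j g, ← xor_assoc, xor_cancel_right]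
  exact Nat.xor_lt_two_pow (List.mem_range.1 hi) (List.mem_range.1 hj)

theorem exists_testBit_eq_of_sublist_sigmaList {t g g' : ℕ} {ρ : List ℕ}
    (hρ : ρ.Sublist (sigmaList t g)) (hρ' : ρ.Sublist (sigmaList t g')) {x y : ℕ}
    (hx : x ∈ ρ) (hy : y ∈ ρ) (hxy : x ≠ y) :
    ∃ m < t, x.testBit m ≠ y.testBit m ∧ g.testBit m = g'.testBit m := by
  let R : ℕ → ℕ → Prop := fun u v =>
    ∃ m < t, u.testBit m ≠ v.testBit m ∧ g.testBit m = g'.testBit m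
  have : Std.Symm R := ⟨fun _ _ ⟨m, hmt, hne, hgg'⟩ => ⟨m, hmt, hne.symm, hgg'⟩⟩
  have hR : ρ.Pairwise R := by
    refine (((sigmaList_pairwise t g).sublist hρ).and
      ((sigmaList_pairwise t g').sublist hρ')).imp_of_mem fun hu hv ⟨h, h'⟩ => ?_
    obtain ⟨m, hm, hne, hgg'⟩ :=
      Nat.exists_testBit_eq_of_xor_lt_xor (fun huv => by simp [huv] at h) h h'
    have hmt : 2 ^ m < 2 ^ t :=
      hm.trans_lt (xor_lt_two_pow_of_mem_sigmaList (hρ.mem hu) (hρ.mem hv))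
    exact ⟨m, (Nat.pow_lt_pow_iff_right (by norm_num)).1 hmt, hne, hgg'⟩
  exact hR.forall hx hy hxy

theorem exists_ne_testBit_eq_of_two_pow_card_lt (I s : Finset ℕ) (h : 2 ^ I.card < s.card) :
    ∃ x ∈ s, ∃ y ∈ s, x ≠ y ∧ ∀ i ∈ I, x.testBit i = y.testBit i := by
  obtain ⟨x, hx, y, hy, hxy, hfxy⟩ := Finset.exists_ne_map_eq_of_card_lt_of_maps_to
    (s := s) (t := I.powerset)
    (f := fun x : ℕ => I.filter fun i => x.testBit i) (by rwa [Finset.card_powerset])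
    fun x _ => Finset.mem_powerset.2 (Finset.filter_subset _ _)
  refine ⟨x, hx, y, hy, hxy, fun i hi => ?_⟩
  simpa [hi] using Finset.ext_iff.1 hfxy i

theorem lcsLen_le {x y : List ℕ} {N : ℕ}
    (h : ∀ s : List ℕ, s.Sublist x → s.Sublist y → s.length ≤ N) :
    lcsLen x y ≤ N := by
  refine List.max_le_of_forall_le _ N fun n hn => ?_
  obtain ⟨s, hs, rfl⟩ := List.mem_map.1 hn
  rw [List.mem_filter, List.mem_sublists, decide_eq_true_iff] at hs
  exact h s hs.1 hs.2

theorem lcs_le_of_small_agreement_general (t g g' : ℕ) (δ : ℝ) (I : Finset ℕ)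
    (hI : I = (Finset.range t).filter (fun i => g.testBit i = g'.testBit i))
    (hIcard : (I.card : ℝ) ≤ δ * t) :
    (∀ ρ : List ℕ, ρ.Sublist (sigmaList t g) → ρ.Sublist (sigmaList t g') →
      (2 : ℝ) ^ (δ * t) < ρ.length →
      ∃ x ∈ ρ, ∃ y ∈ ρ, x ≠ y ∧ ∀ i ∈ I, x.testBit i = y.testBit i) ∧
    (lcsLen (sigmaList t g) (sigmaList t g') : ℝ) ≤ (2 : ℝ) ^ (δ * t) := by
  have hpow : ((2 ^ I.card : ℕ) : ℝ) ≤ (2 : ℝ) ^ (δ * t) := by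
    rw [Nat.cast_pow, Nat.cast_ofNat, ← Real.rpow_natCast]
    exact Real.rpow_le_rpow_of_exponent_le one_le_two hIcard
  have pigeonhole : ∀ ρ : List ℕ, ρ.Sublist (sigmaList t g) → 2 ^ I.card < ρ.length →
      ∃ x ∈ ρ, ∃ y ∈ ρ, x ≠ y ∧ ∀ i ∈ I, x.testBit i = y.testBit i := by
    intro ρ hρ hlen
    rw [← List.toFinset_card_of_nodup ((sigmaList_nodup t g).sublist hρ)] at hlen
    simpa using exists_ne_testBit_eq_of_two_pow_card_lt I _ hlen
  have hlen : ∀ ρ : List ℕ, ρ.Sublist (sigmaList t g) → ρ.Sublist (sigmaList t g') →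
      ρ.length ≤ 2 ^ I.card := by
    intro ρ hρ hρ'
    by_contra! hlong
    obtain ⟨x, hx, y, hy, hxy, hagree⟩ := pigeonhole ρ hρ hlong
    obtain ⟨m, hmt, hne, hgg'⟩ := exists_testBit_eq_of_sublist_sigmaList hρ hρ' hx hy hxy
    exact hne (hagree m (by simp [hI, hmt, hgg']))
  refine ⟨fun ρ hρ _ hlong => pigeonhole ρ hρ (by exact_mod_cast hpow.trans_lt hlong), ?_⟩
  exact (Nat.cast_le.2 (lcsLen_le hlen)).trans hpow

/-- If `g, g' ∈ {0,1}^t` agree on a set `I` of at most `δt` bit positions, then any common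
subsequence of `σ_g` and `σ_{g'}` has length at most `2^{δt}` (a longer one would, by
pigeonhole, contain two distinct elements agreeing on all positions in `I`, which are
ordered oppositely by `σ_g` and `σ_{g'}` — a contradiction). Hence
`L(σ_g, σ_{g'}) ≤ 2^{δt}`. -/
theorem lcs_le_of_small_agreement (t g g' : ℕ) (δ : ℝ) (hδ : δ ∈ Set.Ioo (0 : ℝ) 1)
    (hg : g < 2 ^ t) (hg' : g' < 2 ^ t) (I : Finset ℕ)
    (hI : I = (Finset.range t).filter (fun i => g.testBit i = g'.testBit i))
    (hIcard : (I.card : ℝ) ≤ δ * t) :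
    (∀ ρ : List ℕ, ρ.Sublist (sigmaList t g) → ρ.Sublist (sigmaList t g') →
      (2 : ℝ) ^ (δ * t) < ρ.length →
      ∃ x ∈ ρ, ∃ y ∈ ρ, x ≠ y ∧ ∀ i ∈ I, x.testBit i = y.testBit i) ∧
    (lcsLen (sigmaList t g) (sigmaList t g') : ℝ) ≤ (2 : ℝ) ^ (δ * t) :=
  lcs_le_of_small_agreement_general t g g' δ I hI hIcard
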